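/- In the locking setup, fix an (s,η)-quasi-measurement 𝓜 on C⊗E′ and define g_𝓜(U) = ‖𝓜(ρ_U^{MCE′}) − 𝓜(ρ_U^M ⊗ ρ_U^{CE′})‖₁ for unitaries U on C⊗K⊗E. Then for all unitaries U, V on C⊗K⊗E: |g_𝓜(U) − g_𝓜(V)| ≤ 4η·√( (max_m p_m)·‖ω^E‖_∞ )·‖U − V‖₂ = 4η·√( Δ_{M,∞}·Δ_{E,∞}/(|M|·|E|) )·‖U − V‖₂. That is, g_𝓜 is Lipschitz with constant 4η·√(Δ_{M,∞}Δ_{E,∞}/(|M||E|)) with respect to the Frobenius distance on unitaries. -/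

import Mathlib

open scoped BigOperators Kronecker Classical ComplexOrder
open Matrix MeasureTheory

noncomputable section

/-- Outer product `|v⟩⟨v|`. -/
def outer {A : Type*} [Fintype A] (v : A → ℂ) : Matrix A A ℂ :=
  Matrix.of fun i j => v i * star (v j)

/-- Trace norm `‖X‖₁ = Tr √(XᴴX)`. -/
def traceNorm {A : Type*} [Fintype A] [DecidableEq A] (X : Matrix A A ℂ) : ℝ :=
  ((Matrix.posSemidef_conjTranspose_mul_self X).1.eigenvectorUnitary.1 *
      Matrix.diagonal (fun i : A =>
        ((Real.sqrt ((Matrix.posSemidef_conjTranspose_mul_self X).1.eigenvalues i) : ℝ) : ℂ)) *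
      (star (Matrix.posSemidef_conjTranspose_mul_self X).1.eigenvectorUnitary :
        Matrix A A ℂ)).trace.re

/-- Frobenius norm `‖X‖₂`. -/
def frobNorm {A : Type*} [Fintype A] (X : Matrix A A ℂ) : ℝ :=
  Real.sqrt ((Xᴴ * X).trace.re)

/-- Operator norm (largest singular value) `‖X‖_∞`. -/
def opNorm {A : Type*} [Fintype A] [DecidableEq A] (X : Matrix A A ℂ) : ℝ :=
  ‖Matrix.toEuclideanCLM (𝕜 := ℂ) X‖

instance matrixMeasurableSpace {m n : Type*} : MeasurableSpace (Matrix m n ℂ) :=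
  inferInstanceAs (MeasurableSpace (m → n → ℂ))

/-- A measurement superoperator (given by its POVM elements `Ms`) applied to the second
factor of a bipartite operator, tensored with the identity on the first factor `W`. -/
def measApply {W A X : Type*} [Fintype A] [DecidableEq X]
    (Ms : X → Matrix A A ℂ) (ρ : Matrix (W × A) (W × A) ℂ) :
    Matrix (W × X) (W × X) ℂ :=
  Matrix.of fun p q =>
    if p.2 = q.2 then ∑ a : A, ∑ a' : A, Ms p.2 a a' * ρ (p.1, a') (q.1, a) else 0

/-- A measurement superoperator applied to an operator (no side register). -/
def measApply0 {A X : Type*} [Fintype A] [DecidableEq X]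
    (Ms : X → Matrix A A ℂ) (ρ : Matrix A A ℂ) : Matrix X X ℂ :=
  Matrix.of fun i j => if i = j then ∑ a : A, ∑ a' : A, Ms i a a' * ρ a' a else 0

/-- The elements `Ms` form a POVM: each is positive semidefinite and they sum to `I`. -/
def IsPOVM {A X : Type*} [Fintype A] [Fintype X] [DecidableEq A]
    (Ms : X → Matrix A A ℂ) : Prop :=
  (∀ i, (Ms i).PosSemidef) ∧ ∑ i, Ms i = 1

/-- The tuple of unit vectors `χ` defines an `(s,η)`-quasi-measurement:
`(|A|/s) ∑ᵢ |χᵢ⟩⟨χᵢ| ≤ η I`. -/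
def IsQuasiTuple {A : Type*} [Fintype A] [DecidableEq A] (s : ℕ) (η : ℝ)
    (χ : Fin s → A → ℂ) : Prop :=
  (∀ i, ∑ a, Complex.normSq (χ i a) = 1) ∧
  ((η : ℂ) • (1 : Matrix A A ℂ) -
    ((Fintype.card A : ℂ) / (s : ℂ)) • ∑ i, outer (χ i)).PosSemidef

/-- The kernel elements `(|A|/s)|χᵢ⟩⟨χᵢ|` of an `(s,η)`-quasi-measurement. -/
def quasiKernel {A : Type*} [Fintype A] (s : ℕ) (χ : Fin s → A → ℂ) :
    Fin s → Matrix A A ℂ :=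
  fun i => ((Fintype.card A : ℂ) / (s : ℂ)) • outer (χ i)
/-- The vector `(U ⊗ I_{E'})(|ψ_m⟩ ⊗ |ω⟩)` on `(C⊗K⊗E)⊗E'`. -/
def lockVec (dM dC dK dE dE' : ℕ) (ψ : Fin dM → Fin dC × Fin dK → ℂ)
    (ω : Fin dE × Fin dE' → ℂ)
    (U : Matrix ((Fin dC × Fin dK) × Fin dE) ((Fin dC × Fin dK) × Fin dE) ℂ)
    (m : Fin dM) : ((Fin dC × Fin dK) × Fin dE) × Fin dE' → ℂ :=
  fun q => ∑ r : (Fin dC × Fin dK) × Fin dE, U q.1 r * (ψ m r.1 * ω (r.2, q.2))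

/-- `ρ_U^{MCE'}`, the reduced state of
`ρ_U = ∑ₘ pₘ |m⟩⟨m| ⊗ (U⊗I)(|ψₘ⟩⟨ψₘ| ⊗ |ω⟩⟨ω|)(U⊗I)ᴴ` on `M⊗C⊗E'`. -/
def rhoMCE' (dM dC dK dE dE' : ℕ) (p : Fin dM → ℝ)
    (ψ : Fin dM → Fin dC × Fin dK → ℂ) (ω : Fin dE × Fin dE' → ℂ)
    (U : Matrix ((Fin dC × Fin dK) × Fin dE) ((Fin dC × Fin dK) × Fin dE) ℂ) :
    Matrix (Fin dM × (Fin dC × Fin dE')) (Fin dM × (Fin dC × Fin dE')) ℂ :=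
  Matrix.of fun x y =>
    (if x.1 = y.1 then (p x.1 : ℂ) else 0) *
      ∑ k : Fin dK, ∑ e : Fin dE,
        lockVec dM dC dK dE dE' ψ ω U x.1 (((x.2.1, k), e), x.2.2) *
          star (lockVec dM dC dK dE dE' ψ ω U y.1 (((y.2.1, k), e), y.2.2))

/-- `ρ^M = ∑ₘ pₘ |m⟩⟨m|`. -/
def rhoM (dM : ℕ) (p : Fin dM → ℝ) : Matrix (Fin dM) (Fin dM) ℂ :=
  Matrix.diagonal fun m => (p m : ℂ)

/-- `ρ_U^{CE'}`. -/
def rhoCE' (dM dC dK dE dE' : ℕ) (p : Fin dM → ℝ)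
    (ψ : Fin dM → Fin dC × Fin dK → ℂ) (ω : Fin dE × Fin dE' → ℂ)
    (U : Matrix ((Fin dC × Fin dK) × Fin dE) ((Fin dC × Fin dK) × Fin dE) ℂ) :
    Matrix (Fin dC × Fin dE') (Fin dC × Fin dE') ℂ :=
  Matrix.of fun x y => ∑ m : Fin dM, rhoMCE' dM dC dK dE dE' p ψ ω U (m, x) (m, y)

/-- The reduced state `ω^E = Tr_{E'} |ω⟩⟨ω|`. -/
def omegaE (dE dE' : ℕ) (ω : Fin dE × Fin dE' → ℂ) : Matrix (Fin dE) (Fin dE) ℂ :=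
  Matrix.of fun e e' => ∑ f : Fin dE', ω (e, f) * star (ω (e', f))

/-
After the measurement both states are diagonal in the basis `|m, i⟩`, so that
`g(U) = ∑_{m,i} p_m |F_U(m,i) - ∑_{m'} p_{m'} F_U(m',i)|` with
`F_U(m,i) = (|CE'|/s) ⟨χ_i| ρ_{U,m} |χ_i⟩`, where `ρ_{U,m} = Tr_{KE} |u_m⟩⟨u_m|` is the state of
`CE'` given `M = m` and `u_m = (U ⊗ I)(ψ_m ⊗ ω)`. Hence
`|g(U) - g(V)| ≤ 2 ∑_m p_m ∑_i |F_U(m,i) - F_V(m,i)|`.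
Since `ρ_{U,m} - ρ_{V,m} = Tr_{KE} (|u_m⟩⟨u_m - v_m| + |u_m - v_m⟩⟨v_m|)`, Cauchy–Schwarz together
with `(|CE'|/s) ∑_i |χ_i⟩⟨χ_i| ≤ η I` bounds the inner sum by `2η ‖u_m - v_m‖`. Finally
`∑_m p_m ‖u_m - v_m‖ ≤ √(max p · ∑_m ‖u_m - v_m‖²)`, and because the `ψ_m` form an orthonormal
basis, `∑_m ‖((U - V) ⊗ I)(ψ_m ⊗ ω)‖² = Tr ((U - V)ᴴ (U - V) (I ⊗ ω^E)) ≤ ‖ω^E‖_∞ ‖U - V‖₂²`.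
-/

lemma ofReal_normSq_eq_star_mul_self (z : ℂ) : (Complex.normSq z : ℂ) = star z * z := by
  rw [Complex.normSq_eq_conj_mul_self]; rfl

section MatrixFacts

variable {A : Type*} [Fintype A]

lemma dotProduct_star_self_eq_sum_normSq (x : A → ℂ) :
    star x ⬝ᵥ x = ((∑ a, Complex.normSq (x a) : ℝ) : ℂ) := by
  push_cast
  exact Finset.sum_congr rfl fun a _ => (ofReal_normSq_eq_star_mul_self (x a)).symm

lemma dotProduct_outer_mulVec (v x : A → ℂ) :
    star x ⬝ᵥ (outer v *ᵥ x) = Complex.normSq (star v ⬝ᵥ x) := by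
  have : outer v = vecMulVec v (star v) := rfl
  rw [this, vecMulVec_mulVec, dotProduct_smul, ofReal_normSq_eq_star_mul_self, star_dotProduct,
    star_star]
  simp

lemma trace_outer_mul (v : A → ℂ) (R : Matrix A A ℂ) :
    trace (outer v * R) = star v ⬝ᵥ R *ᵥ v := by
  simp only [trace, diag_apply, mul_apply, outer, of_apply, dotProduct, mulVec, Pi.star_apply,
    Finset.mul_sum]
  rw [Finset.sum_comm]
  exact Finset.sum_congr rfl fun a _ => Finset.sum_congr rfl fun b _ => by ring

lemma frobNorm_eq_sqrt_sum_normSq (W : Matrix A A ℂ) :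
    frobNorm W = √(∑ a, ∑ b, Complex.normSq (W a b)) := by
  have htrace : (Wᴴ * W).trace = ((∑ a, ∑ b, Complex.normSq (W a b) : ℝ) : ℂ) := by
    push_cast
    rw [Finset.sum_comm]
    simp only [trace, diag_apply, mul_apply, conjTranspose_apply, ofReal_normSq_eq_star_mul_self]
  rw [frobNorm, htrace, Complex.ofReal_re]

variable [DecidableEq A]

lemma traceNorm_diagonal (d : A → ℂ) :
    traceNorm (diagonal d) = ∑ a, ‖d a‖ := by
  have hD : (diagonal d)ᴴ * diagonal d = diagonal fun a => ((‖d a‖ ^ 2 : ℝ) : ℂ) := by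
    rw [diagonal_conjTranspose, diagonal_mul_diagonal]
    congr 1
    ext a
    rw [Pi.star_apply, ← ofReal_normSq_eq_star_mul_self, Complex.normSq_eq_norm_sq]
  have h := (posSemidef_conjTranspose_mul_self (diagonal d)).1
  have hroots : Multiset.map (RCLike.ofReal ∘ h.eigenvalues) Finset.univ.val
      = Multiset.map (fun a => ((‖d a‖ ^ 2 : ℝ) : ℂ)) Finset.univ.val := by
    rw [← h.roots_charpoly_eq_eigenvalues, hD, charpoly_diagonal, Finset.prod_eq_multiset_prod]
    have := Polynomial.roots_multiset_prod_X_sub_C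
      (Multiset.map (fun a => ((‖d a‖ ^ 2 : ℝ) : ℂ)) Finset.univ.val)
    rwa [Multiset.map_map] at this
  have hsum := congrArg (fun s : Multiset ℂ => (s.map fun z => √z.re).sum) hroots
  simp only [Multiset.map_map, Function.comp_apply, Complex.ofReal_re] at hsum
  rw [traceNorm, trace_mul_cycle, Unitary.coe_star_mul_self, one_mul, trace_diagonal,
    Complex.re_sum]
  simp only [Complex.ofReal_re]
  simpa [Real.sqrt_sq (norm_nonneg _)] using hsum

lemma re_dotProduct_mulVec_le_opNorm (M : Matrix A A ℂ) (z : A → ℂ) :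
    (star z ⬝ᵥ M *ᵥ z).re ≤ opNorm M * ∑ a, Complex.normSq (z a) := by
  set Z : EuclideanSpace ℂ A := WithLp.toLp 2 z
  have hinner : inner ℂ Z (Matrix.toEuclideanCLM (𝕜 := ℂ) M Z) = star z ⬝ᵥ M *ᵥ z := by
    rw [dotProduct_comm]; rfl
  have hnorm : ‖Z‖ ^ 2 = ∑ a, Complex.normSq (z a) := by
    rw [EuclideanSpace.norm_eq, Real.sq_sqrt (by positivity)]
    simp [Z, Complex.sq_norm]
  calc (star z ⬝ᵥ M *ᵥ z).re ≤ ‖inner ℂ Z (Matrix.toEuclideanCLM (𝕜 := ℂ) M Z)‖ :=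
        hinner ▸ Complex.re_le_norm _
    _ ≤ ‖Z‖ * (opNorm M * ‖Z‖) :=
        (norm_inner_le_norm _ _).trans (by gcongr; exact ContinuousLinearMap.le_opNorm _ _)
    _ = opNorm M * ∑ a, Complex.normSq (z a) := by rw [← hnorm]; ring

end MatrixFacts

lemma sum_normSq_mulVec_of_conjTranspose_mul_self {m n : Type*} [Fintype m] [Fintype n]
    [DecidableEq n] {B : Matrix m n ℂ} (hB : Bᴴ * B = 1) (y : n → ℂ) :
    ∑ i, Complex.normSq ((B *ᵥ y) i) = ∑ j, Complex.normSq (y j) := by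
  apply Complex.ofReal_injective
  rw [← dotProduct_star_self_eq_sum_normSq, ← dotProduct_star_self_eq_sum_normSq, star_mulVec,
    ← dotProduct_mulVec, mulVec_mulVec, hB, one_mulVec]

lemma conjTranspose_mul_self_eq_one_of_orthonormal {m n : Type*} [Fintype m] [Fintype n]
    [DecidableEq m] [DecidableEq n] (hcard : Fintype.card m = Fintype.card n)
    {ψ : m → n → ℂ} (hψ : ∀ i j, ∑ x, star (ψ i x) * ψ j x = if i = j then 1 else 0) :
    (of ψ)ᴴ * of ψ = 1 := by
  have hrows : of ψ * (of ψ)ᴴ = 1 := by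
    ext i j
    have h := congrArg star (hψ i j)
    rw [mul_apply, one_apply]
    split_ifs at h ⊢ <;> simpa [star_sum, mul_comm] using h
  exact (mul_eq_one_comm_of_equiv (Fintype.equivOfCardEq hcard)).mp hrows

section QuasiMeasurement

variable {A ι J : Type*} [Fintype J]

/-- `Tr_J |x⟩⟨y|`, for `x` and `y` read as vectors on `A ⊗ J`. -/
def partialOuter (x y : J → A → ℂ) : Matrix A A ℂ :=
  Matrix.of fun a b => ∑ j, x j a * star (y j b)

lemma partialOuter_self_sub_self (x y : J → A → ℂ) :
    partialOuter x x - partialOuter y y = partialOuter x (x - y) + partialOuter (x - y) y := by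
  ext a b
  simp only [partialOuter, Matrix.sub_apply, Matrix.add_apply, of_apply,
    ← Finset.sum_sub_distrib, ← Finset.sum_add_distrib, Pi.sub_apply, star_sub]
  exact Finset.sum_congr rfl fun j _ => by ring

variable [Fintype A] [Fintype ι]

lemma dotProduct_partialOuter_mulVec (v : A → ℂ) (x y : J → A → ℂ) :
    star v ⬝ᵥ partialOuter x y *ᵥ v = ∑ j, (star v ⬝ᵥ x j) * star (star v ⬝ᵥ y j) := by
  simp only [partialOuter, dotProduct, mulVec, of_apply, Pi.star_apply, star_sum, star_mul',
    star_star, Finset.mul_sum, Finset.sum_mul]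
  conv_lhs => enter [2, a]; rw [Finset.sum_comm]
  rw [Finset.sum_comm]
  refine Finset.sum_congr rfl fun j _ => ?_
  rw [Finset.sum_comm]
  exact Finset.sum_congr rfl fun a _ => Finset.sum_congr rfl fun b _ => by ring

lemma sum_mul_normSq_dotProduct_le [DecidableEq A] {η c : ℝ} {χ : ι → A → ℂ}
    (hχ : ((η : ℂ) • (1 : Matrix A A ℂ) - (c : ℂ) • ∑ i, outer (χ i)).PosSemidef)
    (x : A → ℂ) :
    ∑ i, c * Complex.normSq (star (χ i) ⬝ᵥ x) ≤ η * ∑ a, Complex.normSq (x a) := by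
  have h := hχ.dotProduct_mulVec_nonneg x
  simp only [sub_mulVec, smul_mulVec, one_mulVec, sum_mulVec, dotProduct_sub, dotProduct_smul,
    dotProduct_sum, dotProduct_star_self_eq_sum_normSq, dotProduct_outer_mulVec] at h
  have := (Complex.le_def.mp h).1
  simp only [Complex.zero_re, Complex.sub_re] at this
  simpa [Finset.mul_sum] using this

lemma sum_mul_norm_partialOuter_le [DecidableEq A] {η c : ℝ} (hη : 0 ≤ η) (hc : 0 ≤ c)
    {χ : ι → A → ℂ}
    (hχ : ((η : ℂ) • (1 : Matrix A A ℂ) - (c : ℂ) • ∑ i, outer (χ i)).PosSemidef)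
    (x y : J → A → ℂ) :
    ∑ i, c * ‖star (χ i) ⬝ᵥ partialOuter x y *ᵥ χ i‖
      ≤ η * (√(∑ j, ∑ a, Complex.normSq (x j a)) * √(∑ j, ∑ a, Complex.normSq (y j a))) := by
  have hquasi : ∀ z : J → A → ℂ, ∑ ij : ι × J, c * Complex.normSq (star (χ ij.1) ⬝ᵥ z ij.2)
      ≤ η * ∑ j, ∑ a, Complex.normSq (z j a) := fun z => by
    rw [Fintype.sum_prod_type, Finset.sum_comm, Finset.mul_sum]
    exact Finset.sum_le_sum fun j _ => sum_mul_normSq_dotProduct_le hχ (z j)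
  set X : ι × J → ℝ := fun ij => c * Complex.normSq (star (χ ij.1) ⬝ᵥ x ij.2)
  set Y : ι × J → ℝ := fun ij => c * Complex.normSq (star (χ ij.1) ⬝ᵥ y ij.2)
  calc ∑ i, c * ‖star (χ i) ⬝ᵥ partialOuter x y *ᵥ χ i‖
      ≤ ∑ ij : ι × J, √(X ij) * √(Y ij) := by
        rw [Fintype.sum_prod_type]
        refine Finset.sum_le_sum fun i _ => ?_
        rw [dotProduct_partialOuter_mulVec]
        refine (mul_le_mul_of_nonneg_left (norm_sum_le _ _) hc).trans_eq ?_
        rw [Finset.mul_sum]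
        refine Finset.sum_congr rfl fun j _ => ?_
        simp only [X, Y, Real.sqrt_mul hc, Complex.normSq_eq_norm_sq, Real.sqrt_sq (norm_nonneg _),
          norm_mul, norm_star]
        conv_lhs => rw [← Real.mul_self_sqrt hc]
        ring
    _ ≤ √(∑ ij, X ij) * √(∑ ij, Y ij) :=
        Real.sum_sqrt_mul_sqrt_le _ (fun _ => mul_nonneg hc (Complex.normSq_nonneg _))
          (fun _ => mul_nonneg hc (Complex.normSq_nonneg _))
    _ ≤ √(η * ∑ j, ∑ a, Complex.normSq (x j a)) * √(η * ∑ j, ∑ a, Complex.normSq (y j a)) := by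
        gcongr
        exacts [hquasi x, hquasi y]
    _ = η * (√(∑ j, ∑ a, Complex.normSq (x j a)) * √(∑ j, ∑ a, Complex.normSq (y j a))) := by
        rw [Real.sqrt_mul hη, Real.sqrt_mul hη]
        conv_rhs => rw [← Real.mul_self_sqrt hη]
        ring

end QuasiMeasurement

lemma trace_quasiKernel_mul {A : Type*} [Fintype A] (s : ℕ) (χ : Fin s → A → ℂ) (i : Fin s)
    (R : Matrix A A ℂ) :
    trace (quasiKernel s χ i * R) = (Fintype.card A : ℂ) / s * (star (χ i) ⬝ᵥ R *ᵥ χ i) := by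
  rw [quasiKernel, smul_mul, trace_smul, trace_outer_mul, smul_eq_mul]

lemma sum_norm_trace_quasiKernel_mul_sub_le {A J : Type*} [Fintype A] [DecidableEq A]
    [Fintype J] {s : ℕ} {η : ℝ} (hη : 0 ≤ η) {χ : Fin s → A → ℂ}
    (hχ : ((η : ℂ) • (1 : Matrix A A ℂ) -
      ((Fintype.card A : ℂ) / (s : ℂ)) • ∑ i, outer (χ i)).PosSemidef)
    {x y : J → A → ℂ} (hx : ∑ j, ∑ a, Complex.normSq (x j a) = 1)
    (hy : ∑ j, ∑ a, Complex.normSq (y j a) = 1) :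
    ∑ i, ‖trace (quasiKernel s χ i * partialOuter x x)
        - trace (quasiKernel s χ i * partialOuter y y)‖
      ≤ 2 * η * √(∑ j, ∑ a, Complex.normSq ((x - y) j a)) := by
  set c : ℝ := Fintype.card A / s
  have hc : ((c : ℝ) : ℂ) = (Fintype.card A : ℂ) / (s : ℂ) := by simp [c]
  rw [← hc] at hχ
  have hnorm : ∀ i, ‖trace (quasiKernel s χ i * partialOuter x x)
        - trace (quasiKernel s χ i * partialOuter y y)‖
      ≤ c * ‖star (χ i) ⬝ᵥ partialOuter x (x - y) *ᵥ χ i‖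
        + c * ‖star (χ i) ⬝ᵥ partialOuter (x - y) y *ᵥ χ i‖ := by
    intro i
    rw [← trace_sub, ← Matrix.mul_sub, trace_quasiKernel_mul, partialOuter_self_sub_self,
      add_mulVec, dotProduct_add, ← hc, norm_mul, Complex.norm_real,
      Real.norm_of_nonneg (by positivity), ← mul_add]
    exact mul_le_mul_of_nonneg_left (norm_add_le _ _) (by positivity)
  refine (Finset.sum_le_sum fun i _ => hnorm i).trans ?_
  rw [Finset.sum_add_distrib]
  refine (add_le_add (sum_mul_norm_partialOuter_le hη (by positivity) hχ x (x - y))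
    (sum_mul_norm_partialOuter_le hη (by positivity) hχ (x - y) y)).trans_eq ?_
  rw [hx, hy, Real.sqrt_one]
  ring

lemma measApply_of_blockDiagonal {W A X : Type*} [Fintype A] [DecidableEq W] [DecidableEq X]
    (Ms : X → Matrix A A ℂ) (B : W → Matrix A A ℂ) (ρ : Matrix (W × A) (W × A) ℂ)
    (hρ : ∀ w a w' a', ρ (w, a) (w', a') = if w = w' then B w a a' else 0) :
    measApply Ms ρ = diagonal fun wx => trace (Ms wx.2 * B wx.1) := by
  ext ⟨w, x⟩ ⟨w', x'⟩
  simp only [measApply, of_apply, hρ, diagonal_apply, Prod.mk.injEq, trace, diag_apply, mul_apply]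
  by_cases hx : x = x' <;> by_cases hw : w = w' <;> simp [hx, hw]

section Averaging

variable {M I : Type*} [Fintype M] [Fintype I] {p : M → ℝ}

lemma sum_norm_mul_sub_mean_le (hp0 : ∀ m, 0 ≤ p m) (hp1 : ∑ m, p m = 1) (D : M → I → ℂ) :
    ∑ mi : M × I, ‖(p mi.1 : ℂ) * (D mi.1 mi.2 - ∑ m, (p m : ℂ) * D m mi.2)‖
      ≤ 2 * ∑ m, p m * ∑ i, ‖D m i‖ := by
  have hterm : ∀ m i, ‖(p m : ℂ) * (D m i - ∑ m', (p m' : ℂ) * D m' i)‖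
      ≤ p m * ‖D m i‖ + p m * ∑ m', p m' * ‖D m' i‖ := by
    intro m i
    rw [norm_mul, Complex.norm_real, Real.norm_of_nonneg (hp0 m), ← mul_add]
    refine mul_le_mul_of_nonneg_left ((norm_sub_le _ _).trans (add_le_add_right ?_ _)) (hp0 m)
    refine (norm_sum_le _ _).trans_eq (Finset.sum_congr rfl fun m' _ => ?_)
    rw [norm_mul, Complex.norm_real, Real.norm_of_nonneg (hp0 m')]
  calc _ ≤ ∑ mi : M × I, (p mi.1 * ‖D mi.1 mi.2‖ + p mi.1 * ∑ m', p m' * ‖D m' mi.2‖) :=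
        Finset.sum_le_sum fun mi _ => hterm mi.1 mi.2
    _ = ∑ m, p m * ∑ i, ‖D m i‖ + (∑ m, p m) * ∑ m, p m * ∑ i, ‖D m i‖ := by
        rw [Fintype.sum_prod_type, Finset.sum_mul]
        simp only [Finset.sum_add_distrib, ← Finset.mul_sum]
        congr 1
        refine Finset.sum_congr rfl fun m _ => ?_
        rw [Finset.sum_comm]
        simp only [Finset.mul_sum]
    _ = 2 * ∑ m, p m * ∑ i, ‖D m i‖ := by rw [hp1]; ring

lemma abs_sum_norm_mul_sub_mean_sub_le (hp0 : ∀ m, 0 ≤ p m) (hp1 : ∑ m, p m = 1)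
    (F G : M → I → ℂ) :
    |∑ mi : M × I, ‖(p mi.1 : ℂ) * (F mi.1 mi.2 - ∑ m, (p m : ℂ) * F m mi.2)‖
      - ∑ mi : M × I, ‖(p mi.1 : ℂ) * (G mi.1 mi.2 - ∑ m, (p m : ℂ) * G m mi.2)‖|
      ≤ 2 * ∑ m, p m * ∑ i, ‖F m i - G m i‖ := by
  rw [← Finset.sum_sub_distrib]
  refine (Finset.abs_sum_le_sum_abs _ _).trans ?_
  refine (Finset.sum_le_sum fun mi _ => abs_norm_sub_norm_le _ _).trans ?_
  refine le_of_eq_of_le (Finset.sum_congr rfl fun mi _ => ?_)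
    (sum_norm_mul_sub_mean_le hp0 hp1 (F - G))
  simp only [Pi.sub_apply, mul_sub, Finset.sum_sub_distrib]
  congr 1
  ring

lemma sum_mul_sqrt_le_sqrt_iSup_mul_sum (hp0 : ∀ m, 0 ≤ p m) (hp1 : ∑ m, p m = 1)
    {N : M → ℝ} (hN : ∀ m, 0 ≤ N m) :
    ∑ m, p m * √(N m) ≤ √((⨆ m, p m) * ∑ m, N m) := by
  have hsup : ∀ m, p m ≤ ⨆ m, p m := le_ciSup (Set.finite_range p).bddAbove
  calc ∑ m, p m * √(N m) = ∑ m, √(p m) * √(p m * N m) := by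
        refine Finset.sum_congr rfl fun m _ => ?_
        rw [Real.sqrt_mul (hp0 m), ← mul_assoc, Real.mul_self_sqrt (hp0 m)]
    _ ≤ √(∑ m, p m) * √(∑ m, p m * N m) :=
        Real.sum_sqrt_mul_sqrt_le _ hp0 fun m => mul_nonneg (hp0 m) (hN m)
    _ ≤ √((⨆ m, p m) * ∑ m, N m) := by
        rw [hp1, Real.sqrt_one, one_mul, Finset.mul_sum]
        exact Real.sqrt_le_sqrt (Finset.sum_le_sum fun m _ =>
          mul_le_mul_of_nonneg_right (hsup m) (hN m))

end Averaging

section Locking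

variable {dM dC dK dE dE' : ℕ}

/-- The components `x_{k,e} ∈ C ⊗ E'` of `x ∈ C ⊗ K ⊗ E ⊗ E'` along the basis `|k, e⟩` of `K ⊗ E`,
so that `Tr_{KE} |x⟩⟨y| = partialOuter (lockSlices x) (lockSlices y)`. -/
def lockSlices (x : ((Fin dC × Fin dK) × Fin dE) × Fin dE' → ℂ) :
    Fin dK × Fin dE → Fin dC × Fin dE' → ℂ :=
  fun j a => x (((a.1, j.1), j.2), a.2)

lemma sum_normSq_lockSlices (x : ((Fin dC × Fin dK) × Fin dE) × Fin dE' → ℂ) :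
    ∑ j, ∑ a, Complex.normSq (lockSlices x j a) = ∑ q, Complex.normSq (x q) := by
  simp only [lockSlices, Fintype.sum_prod_type]
  exact (Finset.sum_congr rfl fun _ _ => Finset.sum_comm).trans Finset.sum_comm

lemma lockVec_sub (ψ : Fin dM → Fin dC × Fin dK → ℂ) (ω : Fin dE × Fin dE' → ℂ)
    (U V : Matrix ((Fin dC × Fin dK) × Fin dE) ((Fin dC × Fin dK) × Fin dE) ℂ) (m : Fin dM) :
    lockVec dM dC dK dE dE' ψ ω (U - V) m
      = lockVec dM dC dK dE dE' ψ ω U m - lockVec dM dC dK dE dE' ψ ω V m := by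
  ext q
  simp [lockVec, sub_mul, Finset.sum_sub_distrib]

lemma sum_normSq_lockVec_of_unitary {ψ : Fin dM → Fin dC × Fin dK → ℂ}
    {ω : Fin dE × Fin dE' → ℂ}
    {U : Matrix ((Fin dC × Fin dK) × Fin dE) ((Fin dC × Fin dK) × Fin dE) ℂ}
    (hU : Uᴴ * U = 1) {m : Fin dM} (hψ : ∑ x, Complex.normSq (ψ m x) = 1)
    (hω : ∑ q, Complex.normSq (ω q) = 1) :
    ∑ q, Complex.normSq (lockVec dM dC dK dE dE' ψ ω U m q) = 1 := by
  calc ∑ q, Complex.normSq (lockVec dM dC dK dE dE' ψ ω U m q)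
      = ∑ f, ∑ r, Complex.normSq ((U *ᵥ fun r => ψ m r.1 * ω (r.2, f)) r) := by
        rw [Fintype.sum_prod_type, Finset.sum_comm]; rfl
    _ = ∑ f, ∑ r : (Fin dC × Fin dK) × Fin dE, Complex.normSq (ψ m r.1 * ω (r.2, f)) :=
        Finset.sum_congr rfl fun f _ => sum_normSq_mulVec_of_conjTranspose_mul_self hU _
    _ = (∑ x, Complex.normSq (ψ m x)) * ∑ q, Complex.normSq (ω q) := by
        rw [Finset.sum_comm]
        simp only [Complex.normSq_mul, ← Finset.mul_sum]
        rw [Fintype.sum_prod_type, Fintype.sum_prod_type (f := fun q => Complex.normSq (ω q)),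
          Finset.sum_mul]
        simp only [← Finset.mul_sum]
    _ = 1 := by rw [hψ, hω, one_mul]

lemma sum_normSq_sum_mul_le_opNorm_omegaE (ω : Fin dE × Fin dE' → ℂ) (w : Fin dE → ℂ) :
    ∑ f, Complex.normSq (∑ e, w e * ω (e, f))
      ≤ opNorm (omegaE dE dE' ω) * ∑ e, Complex.normSq (w e) := by
  have hquad : star (star w) ⬝ᵥ omegaE dE dE' ω *ᵥ star w
      = ((∑ f, Complex.normSq (∑ e, w e * ω (e, f)) : ℝ) : ℂ) := by
    push_cast
    simp only [ofReal_normSq_eq_star_mul_self, star_sum, star_mul', Finset.sum_mul, Finset.mul_sum,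
      omegaE, dotProduct, mulVec, of_apply, star_star, Pi.star_apply]
    symm
    rw [Finset.sum_comm]
    refine Finset.sum_congr rfl fun e _ => ?_
    rw [Finset.sum_comm]
    exact Finset.sum_congr rfl fun e' _ => Finset.sum_congr rfl fun f _ => by ring
  have := re_dotProduct_mulVec_le_opNorm (omegaE dE dE' ω) (star w)
  rw [hquad, Complex.ofReal_re] at this
  simpa [Complex.normSq_conj] using this

lemma sum_normSq_lockVec_le {ψ : Fin dM → Fin dC × Fin dK → ℂ} (hψ : (of ψ)ᴴ * of ψ = 1)
    (ω : Fin dE × Fin dE' → ℂ)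
    (W : Matrix ((Fin dC × Fin dK) × Fin dE) ((Fin dC × Fin dK) × Fin dE) ℂ) :
    ∑ m, ∑ q, Complex.normSq (lockVec dM dC dK dE dE' ψ ω W m q)
      ≤ opNorm (omegaE dE dE' ω) * ∑ a, ∑ b, Complex.normSq (W a b) := by
  have hparseval : ∀ a f, ∑ m, Complex.normSq (lockVec dM dC dK dE dE' ψ ω W m (a, f))
      = ∑ x, Complex.normSq (∑ e, W a (x, e) * ω (e, f)) := by
    intro a f
    have hmulVec : ∀ m, lockVec dM dC dK dE dE' ψ ω W m (a, f)
        = (of ψ *ᵥ fun x => ∑ e, W a (x, e) * ω (e, f)) m := by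
      intro m
      simp only [lockVec, mulVec, dotProduct, of_apply, Fintype.sum_prod_type, Finset.mul_sum]
      exact Finset.sum_congr rfl fun _ _ => Finset.sum_congr rfl fun _ _ =>
        Finset.sum_congr rfl fun _ _ => by ring
    simp only [hmulVec]
    exact sum_normSq_mulVec_of_conjTranspose_mul_self hψ _
  calc ∑ m, ∑ q, Complex.normSq (lockVec dM dC dK dE dE' ψ ω W m q)
      = ∑ a, ∑ x, ∑ f, Complex.normSq (∑ e, W a (x, e) * ω (e, f)) := by
        rw [Finset.sum_comm, Fintype.sum_prod_type]
        simp only [hparseval]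
        exact Finset.sum_congr rfl fun a _ => Finset.sum_comm
    _ ≤ ∑ a, ∑ x, opNorm (omegaE dE dE' ω) * ∑ e, Complex.normSq (W a (x, e)) :=
        Finset.sum_le_sum fun a _ => Finset.sum_le_sum fun x _ =>
          sum_normSq_sum_mul_le_opNorm_omegaE ω _
    _ = opNorm (omegaE dE dE' ω) * ∑ a, ∑ b, Complex.normSq (W a b) := by
        simp only [Finset.mul_sum, Fintype.sum_prod_type]

lemma sum_mul_sqrt_normSq_lockVec_le {p : Fin dM → ℝ} (hp0 : ∀ m, 0 ≤ p m)
    (hp1 : ∑ m, p m = 1) {ψ : Fin dM → Fin dC × Fin dK → ℂ} (hψ : (of ψ)ᴴ * of ψ = 1)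
    (ω : Fin dE × Fin dE' → ℂ)
    (W : Matrix ((Fin dC × Fin dK) × Fin dE) ((Fin dC × Fin dK) × Fin dE) ℂ) :
    ∑ m, p m * √(∑ q, Complex.normSq (lockVec dM dC dK dE dE' ψ ω W m q))
      ≤ √((⨆ m, p m) * opNorm (omegaE dE dE' ω)) * frobNorm W := by
  have hsup : 0 ≤ ⨆ m, p m := Real.iSup_nonneg hp0
  calc ∑ m, p m * √(∑ q, Complex.normSq (lockVec dM dC dK dE dE' ψ ω W m q))
      ≤ √((⨆ m, p m) * ∑ m, ∑ q, Complex.normSq (lockVec dM dC dK dE dE' ψ ω W m q)) :=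
        sum_mul_sqrt_le_sqrt_iSup_mul_sum hp0 hp1 fun m =>
          Finset.sum_nonneg fun _ _ => Complex.normSq_nonneg _
    _ ≤ √((⨆ m, p m) * (opNorm (omegaE dE dE' ω) * ∑ a, ∑ b, Complex.normSq (W a b))) := by
        gcongr
        exact sum_normSq_lockVec_le hψ ω W
    _ = √((⨆ m, p m) * opNorm (omegaE dE dE' ω)) * frobNorm W := by
        rw [frobNorm_eq_sqrt_sum_normSq, ← mul_assoc]
        exact Real.sqrt_mul' _
          (Finset.sum_nonneg fun _ _ => Finset.sum_nonneg fun _ _ => Complex.normSq_nonneg _)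

def condStateCE' (ψ : Fin dM → Fin dC × Fin dK → ℂ) (ω : Fin dE × Fin dE' → ℂ)
    (U : Matrix ((Fin dC × Fin dK) × Fin dE) ((Fin dC × Fin dK) × Fin dE) ℂ) (m : Fin dM) :
    Matrix (Fin dC × Fin dE') (Fin dC × Fin dE') ℂ :=
  partialOuter (lockSlices (lockVec dM dC dK dE dE' ψ ω U m))
    (lockSlices (lockVec dM dC dK dE dE' ψ ω U m))

section States

variable (p : Fin dM → ℝ) (ψ : Fin dM → Fin dC × Fin dK → ℂ) (ω : Fin dE × Fin dE' → ℂ)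
  (U : Matrix ((Fin dC × Fin dK) × Fin dE) ((Fin dC × Fin dK) × Fin dE) ℂ)

lemma rhoMCE'_apply (m m' : Fin dM) (a a' : Fin dC × Fin dE') :
    rhoMCE' dM dC dK dE dE' p ψ ω U (m, a) (m', a')
      = if m = m' then (p m : ℂ) * condStateCE' ψ ω U m a a' else 0 := by
  simp only [rhoMCE', of_apply, condStateCE', partialOuter, lockSlices, Fintype.sum_prod_type]
  split_ifs with h
  · subst h; rfl
  · simp

lemma rhoCE'_eq_sum : rhoCE' dM dC dK dE dE' p ψ ω U = ∑ m, (p m : ℂ) • condStateCE' ψ ω U m := by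
  ext a a'
  simp [rhoCE', rhoMCE'_apply, Matrix.sum_apply]

lemma rhoM_kronecker_apply (R : Matrix (Fin dC × Fin dE') (Fin dC × Fin dE') ℂ)
    (m m' : Fin dM) (a a' : Fin dC × Fin dE') :
    (rhoM dM p ⊗ₖ R) (m, a) (m', a') = if m = m' then (p m : ℂ) * R a a' else 0 := by
  simp only [kroneckerMap_apply, rhoM, diagonal_apply]
  split_ifs <;> simp

lemma traceNorm_measApply_rhoMCE'_sub {X : Type*} [Fintype X] [DecidableEq X]
    (Ms : X → Matrix (Fin dC × Fin dE') (Fin dC × Fin dE') ℂ) :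
    traceNorm (measApply Ms (rhoMCE' dM dC dK dE dE' p ψ ω U)
        - measApply Ms (rhoM dM p ⊗ₖ rhoCE' dM dC dK dE dE' p ψ ω U))
      = ∑ mx : Fin dM × X, ‖(p mx.1 : ℂ) * (trace (Ms mx.2 * condStateCE' ψ ω U mx.1)
          - ∑ m, (p m : ℂ) * trace (Ms mx.2 * condStateCE' ψ ω U m))‖ := by
  rw [measApply_of_blockDiagonal Ms (fun m => (p m : ℂ) • condStateCE' ψ ω U m) _
      fun m a m' a' => by rw [rhoMCE'_apply, Matrix.smul_apply, smul_eq_mul],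
    measApply_of_blockDiagonal Ms (fun m => (p m : ℂ) • rhoCE' dM dC dK dE dE' p ψ ω U) _
      fun m a m' a' => by rw [rhoM_kronecker_apply, Matrix.smul_apply, smul_eq_mul],
    diagonal_sub, traceNorm_diagonal]
  refine Finset.sum_congr rfl fun mx _ => ?_
  simp only [rhoCE'_eq_sum, Matrix.mul_smul, Matrix.mul_sum, trace_smul, trace_sum, smul_eq_mul,
    mul_sub]

end States

lemma sum_norm_trace_quasiKernel_condStateCE'_sub_le {s : ℕ} {η : ℝ} (hη : 0 ≤ η)
    {χ : Fin s → Fin dC × Fin dE' → ℂ}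
    (hχ : ((η : ℂ) • (1 : Matrix (Fin dC × Fin dE') (Fin dC × Fin dE') ℂ) -
      ((Fintype.card (Fin dC × Fin dE') : ℂ) / (s : ℂ)) • ∑ i, outer (χ i)).PosSemidef)
    {ψ : Fin dM → Fin dC × Fin dK → ℂ} {ω : Fin dE × Fin dE' → ℂ}
    (hω : ∑ q, Complex.normSq (ω q) = 1)
    {U V : Matrix ((Fin dC × Fin dK) × Fin dE) ((Fin dC × Fin dK) × Fin dE) ℂ}
    (hU : Uᴴ * U = 1) (hV : Vᴴ * V = 1) {m : Fin dM} (hψ : ∑ x, Complex.normSq (ψ m x) = 1) :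
    ∑ i, ‖trace (quasiKernel s χ i * condStateCE' ψ ω U m)
        - trace (quasiKernel s χ i * condStateCE' ψ ω V m)‖
      ≤ 2 * η * √(∑ q, Complex.normSq (lockVec dM dC dK dE dE' ψ ω (U - V) m q)) := by
  have hunit : ∀ W : Matrix ((Fin dC × Fin dK) × Fin dE) ((Fin dC × Fin dK) × Fin dE) ℂ,
      Wᴴ * W = 1 →
        ∑ j, ∑ a, Complex.normSq (lockSlices (lockVec dM dC dK dE dE' ψ ω W m) j a) = 1 :=
    fun W hW => (sum_normSq_lockSlices _).trans (sum_normSq_lockVec_of_unitary hW hψ hω)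
  rw [lockVec_sub, ← sum_normSq_lockSlices]
  exact sum_norm_trace_quasiKernel_mul_sub_le hη hχ (hunit U hU) (hunit V hV)

lemma sum_mul_sum_norm_trace_quasiKernel_condStateCE'_sub_le {s : ℕ} {η : ℝ} (hη : 0 ≤ η)
    {χ : Fin s → Fin dC × Fin dE' → ℂ}
    (hχ : ((η : ℂ) • (1 : Matrix (Fin dC × Fin dE') (Fin dC × Fin dE') ℂ) -
      ((Fintype.card (Fin dC × Fin dE') : ℂ) / (s : ℂ)) • ∑ i, outer (χ i)).PosSemidef)
    {p : Fin dM → ℝ} (hp0 : ∀ m, 0 ≤ p m) (hp1 : ∑ m, p m = 1)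
    (hdim : dM = dC * dK) {ψ : Fin dM → Fin dC × Fin dK → ℂ}
    (hψ : ∀ m m', ∑ x, star (ψ m x) * ψ m' x = if m = m' then 1 else 0)
    {ω : Fin dE × Fin dE' → ℂ} (hω : ∑ q, Complex.normSq (ω q) = 1)
    {U V : Matrix ((Fin dC × Fin dK) × Fin dE) ((Fin dC × Fin dK) × Fin dE) ℂ}
    (hU : Uᴴ * U = 1) (hV : Vᴴ * V = 1) :
    ∑ m, p m * ∑ i, ‖trace (quasiKernel s χ i * condStateCE' ψ ω U m)
        - trace (quasiKernel s χ i * condStateCE' ψ ω V m)‖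
      ≤ 2 * η * (√((⨆ m, p m) * opNorm (omegaE dE dE' ω)) * frobNorm (U - V)) := by
  have hψm : ∀ m, ∑ x, Complex.normSq (ψ m x) = 1 := fun m => by
    have h := hψ m m
    rw [if_pos rfl] at h
    exact_mod_cast (dotProduct_star_self_eq_sum_normSq (ψ m)).symm.trans h
  calc _ ≤ ∑ m, p m *
          (2 * η * √(∑ q, Complex.normSq (lockVec dM dC dK dE dE' ψ ω (U - V) m q))) :=
        Finset.sum_le_sum fun m _ => mul_le_mul_of_nonneg_left
          (sum_norm_trace_quasiKernel_condStateCE'_sub_le hη hχ hω hU hV (hψm m)) (hp0 m)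
    _ = 2 * η * ∑ m, p m * √(∑ q, Complex.normSq (lockVec dM dC dK dE dE' ψ ω (U - V) m q)) := by
        rw [Finset.mul_sum]
        exact Finset.sum_congr rfl fun m _ => by ring
    _ ≤ _ := by
        gcongr
        exact sum_mul_sqrt_normSq_lockVec_le hp0 hp1
          (conjTranspose_mul_self_eq_one_of_orthonormal (by simp [hdim]) hψ) ω _

end Locking

theorem lipschitz_in_unitary_for_fixed_quasi_measurement_general
    (dM dC dK dE dE' : ℕ) (hdim : dM = dC * dK)
    (p : Fin dM → ℝ) (hp0 : ∀ m, 0 ≤ p m) (hp1 : ∑ m, p m = 1)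
    (ψ : Fin dM → Fin dC × Fin dK → ℂ)
    (hψ : ∀ m m', ∑ x, star (ψ m x) * ψ m' x = if m = m' then 1 else 0)
    (ω : Fin dE × Fin dE' → ℂ) (hω : ∑ q, Complex.normSq (ω q) = 1)
    (s : ℕ) (η : ℝ) (hη : 0 < η)
    (χ : Fin s → Fin dC × Fin dE' → ℂ) (hχ : IsQuasiTuple s η χ)
    (U V : Matrix.unitaryGroup ((Fin dC × Fin dK) × Fin dE) ℂ) :
    (|traceNorm (measApply (quasiKernel s χ) (rhoMCE' dM dC dK dE dE' p ψ ω (U : Matrix _ _ ℂ))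
          - measApply (quasiKernel s χ)
              (rhoM dM p ⊗ₖ rhoCE' dM dC dK dE dE' p ψ ω (U : Matrix _ _ ℂ)))
      - traceNorm (measApply (quasiKernel s χ) (rhoMCE' dM dC dK dE dE' p ψ ω (V : Matrix _ _ ℂ))
          - measApply (quasiKernel s χ)
              (rhoM dM p ⊗ₖ rhoCE' dM dC dK dE dE' p ψ ω (V : Matrix _ _ ℂ)))|
      ≤ 4 * η * Real.sqrt ((⨆ m : Fin dM, p m) * opNorm (omegaE dE dE' ω)) *
          frobNorm ((U : Matrix ((Fin dC × Fin dK) × Fin dE) ((Fin dC × Fin dK) × Fin dE) ℂ)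
            - (V : Matrix ((Fin dC × Fin dK) × Fin dE) ((Fin dC × Fin dK) × Fin dE) ℂ)))
    ∧ 4 * η * Real.sqrt ((⨆ m : Fin dM, p m) * opNorm (omegaE dE dE' ω))
      = 4 * η * Real.sqrt (((dM : ℝ) * (⨆ m : Fin dM, p m)) * ((dE : ℝ) * opNorm (omegaE dE dE' ω))
          / ((dM : ℝ) * (dE : ℝ))) := by
  have hdM : (dM : ℝ) ≠ 0 := Nat.cast_ne_zero.mpr (by rintro rfl; simp at hp1)
  have hdE : (dE : ℝ) ≠ 0 := Nat.cast_ne_zero.mpr (by rintro rfl; simp at hω)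
  refine ⟨?_, by congr 2; field_simp⟩
  rw [traceNorm_measApply_rhoMCE'_sub, traceNorm_measApply_rhoMCE'_sub]
  calc _ ≤ 2 * ∑ m, p m * ∑ i, ‖trace (quasiKernel s χ i * condStateCE' ψ ω U m)
          - trace (quasiKernel s χ i * condStateCE' ψ ω V m)‖ :=
        abs_sum_norm_mul_sub_mean_sub_le hp0 hp1
          (fun m i => trace (quasiKernel s χ i * condStateCE' ψ ω U m))
          (fun m i => trace (quasiKernel s χ i * condStateCE' ψ ω V m))
    _ ≤ _ := by
        linarith [sum_mul_sum_norm_trace_quasiKernel_condStateCE'_sub_le hη.le hχ.2 hp0 hp1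
          hdim hψ hω (Matrix.UnitaryGroup.star_mul_self U) (Matrix.UnitaryGroup.star_mul_self V)]

/-- `g_𝓜(U)` is Lipschitz with constant `4η√(Δ_{M,∞}Δ_{E,∞}/(|M||E|))` in the
Frobenius distance on unitaries. -/
theorem lipschitz_in_unitary_for_fixed_quasi_measurement
    (dM dC dK dE dE' : ℕ) (hdim : dM = dC * dK)
    (p : Fin dM → ℝ) (hp0 : ∀ m, 0 ≤ p m) (hp1 : ∑ m, p m = 1)
    (ψ : Fin dM → Fin dC × Fin dK → ℂ)
    (hψ : ∀ m m', ∑ x, star (ψ m x) * ψ m' x = if m = m' then 1 else 0)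
    (ω : Fin dE × Fin dE' → ℂ) (hω : ∑ q, Complex.normSq (ω q) = 1)
    (s : ℕ) (hs : 1 ≤ s) (η : ℝ) (hη : 0 < η)
    (χ : Fin s → Fin dC × Fin dE' → ℂ) (hχ : IsQuasiTuple s η χ)
    (U V : Matrix.unitaryGroup ((Fin dC × Fin dK) × Fin dE) ℂ) :
    (|traceNorm (measApply (quasiKernel s χ) (rhoMCE' dM dC dK dE dE' p ψ ω (U : Matrix _ _ ℂ))
          - measApply (quasiKernel s χ)
              (rhoM dM p ⊗ₖ rhoCE' dM dC dK dE dE' p ψ ω (U : Matrix _ _ ℂ)))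
      - traceNorm (measApply (quasiKernel s χ) (rhoMCE' dM dC dK dE dE' p ψ ω (V : Matrix _ _ ℂ))
          - measApply (quasiKernel s χ)
              (rhoM dM p ⊗ₖ rhoCE' dM dC dK dE dE' p ψ ω (V : Matrix _ _ ℂ)))|
      ≤ 4 * η * Real.sqrt ((⨆ m : Fin dM, p m) * opNorm (omegaE dE dE' ω)) *
          frobNorm ((U : Matrix ((Fin dC × Fin dK) × Fin dE) ((Fin dC × Fin dK) × Fin dE) ℂ)
            - (V : Matrix ((Fin dC × Fin dK) × Fin dE) ((Fin dC × Fin dK) × Fin dE) ℂ)))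
    ∧ 4 * η * Real.sqrt ((⨆ m : Fin dM, p m) * opNorm (omegaE dE dE' ω))
      = 4 * η * Real.sqrt (((dM : ℝ) * (⨆ m : Fin dM, p m)) * ((dE : ℝ) * opNorm (omegaE dE dE' ω))
          / ((dM : ℝ) * (dE : ℝ))) :=
  lipschitz_in_unitary_for_fixed_quasi_measurement_general dM dC dK dE dE' hdim p hp0 hp1 ψ hψ ω hω
    s η hη χ hχ U V
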